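/- Let (M, Σ_M, μ_M) be a measure space whose measure is not purely infinite (there exists a measurable set A with 0 < μ_M(A) < ∞), let (N, d_N) be a metric space, and h : M → N strongly measurable. If (L²_h(M,N), D₂) is a complete geodesic space satisfying the global NPC comparison inequality — for every constant speed geodesic c : [0,1] → L²_h(M,N), every F ∈ L²_h(M,N) and every t ∈ [0,1], D₂(F, c(t))² ≤ (1−t) D₂(F, c(0))² + t D₂(F, c(1))² − (1−t)t D₂(c(0), c(1))² — then N is a complete geodesic space satisfying the global NPC comparison inequality: for every constant speed geodesic γ : [0,1] → N, every z ∈ N and every t ∈ [0,1], d_N(z, γ(t))² ≤ (1−t) d_N(z, γ(0))² + t d_N(z, γ(1))² − (1−t)t d_N(γ(0), γ(1))². -/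

import Mathlib

/-!
Choose a set `A` of finite positive measure on which `h` stays within distance `1` of a point,
so that replacing `h` by the constant `y` on `A` stays in `L²_h`. This embeds `N` into `L²_h`
with all distances multiplied by `μ(A)^{1/2}`, so the NPC inequality restricts to `N`, and a
Cauchy sequence in `N` converges, since a subsequence of its image converges pointwise a.e. to its
`L²` limit.

For geodesics, let `c` be an `L²` geodesic between the images of `y` and `y'`. As
`D₂(c_0, c_t) = D₂(c_0, c_s) + D₂(c_s, c_t)` and the `L²` norm is strictly convex, the pointwise
triangle inequality must be an equality with proportional terms, so for `s ≤ t`, a.e.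
`d(c_s(x), c_t(x)) = (t - s) d(c_0(x), c_1(x))`. A point `x ∈ A` that is good for
all rational pairs gives a geodesic from `y` to `y'` on the rationals of `[0,1]`, which extends
to `[0,1]` by completeness.
-/

set_option linter.unusedSectionVars false

open MeasureTheory ENNReal Set Filter Topology TopologicalSpace

noncomputable section

namespace NLS

variable {α : Type*} [MeasurableSpace α] {N : Type*} [MetricSpace N]
  [MeasurableSpace N] [BorelSpace N]

/-- "Strongly measurable": Borel measurable with separable range. -/
def SM (f : α → N) : Prop :=
  Measurable f ∧ TopologicalSpace.IsSeparable (Set.range f)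

theorem SM.aesm {f : α → N} (hf : SM f) (μ : Measure α) :
    AEStronglyMeasurable f μ :=
  (stronglyMeasurable_iff_measurable_separable.2 ⟨hf.1, hf.2⟩).aestronglyMeasurable

/-- The `L^p` (extended) distance between two maps with values in a metric space;
for `p < ∞` it is `(∫ d(f x, g x)^p dμ)^{1/p}` and for `p = ∞` the essential supremum
of `x ↦ d(f x, g x)`. -/
def Dp (μ : Measure α) (p : ℝ≥0∞) (f g : α → N) : ℝ≥0∞ :=
  eLpNorm (fun x => dist (f x) (g x)) p μ

theorem Dp_self (μ : Measure α) (p : ℝ≥0∞) (f : α → N) : Dp μ p f f = 0 := by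
  unfold Dp
  simp only [dist_self]
  exact eLpNorm_zero'

theorem Dp_comm (μ : Measure α) (p : ℝ≥0∞) (f g : α → N) : Dp μ p f g = Dp μ p g f := by
  unfold Dp
  simp only [dist_comm]

theorem Dp_triangle {μ : Measure α} {p : ℝ≥0∞} (hp : 1 ≤ p) {f g k : α → N}
    (hf : AEStronglyMeasurable f μ) (hg : AEStronglyMeasurable g μ)
    (hk : AEStronglyMeasurable k μ) :
    Dp μ p f k ≤ Dp μ p f g + Dp μ p g k := by
  have h1 : Dp μ p f k ≤
      eLpNorm ((fun x => dist (f x) (g x)) + fun x => dist (g x) (k x)) p μ := by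
    refine eLpNorm_mono fun x => ?_
    simp only [Pi.add_apply, Real.norm_eq_abs]
    rw [abs_of_nonneg dist_nonneg]
    exact (dist_triangle (f x) (g x) (k x)).trans (le_abs_self _)
  exact h1.trans (eLpNorm_add_le (hf.dist hg) (hg.dist hk) hp)

/-- The nonlinear Lebesgue space `L^p_h(α, N)` with base map `h`, presented by
representatives: Borel measurable, separably valued maps at finite `D_p`-distance
from `h`.  Two representatives at `D_p`-distance `0` (equivalently, `μ`-a.e. equal)
represent the same element of the quotient nonlinear Lebesgue space; accordingly the
canonical structure below is a pseudometric space whose metric (separation) quotient is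
the actual nonlinear Lebesgue space.  All topological and Borel-measurability notions for
the quotient correspond exactly to those of this pseudometric space. -/
def NLp (μ : Measure α) (h : α → N) (_hh : SM h) (p : ℝ≥0∞) : Type _ :=
  {f : α → N // SM f ∧ Dp μ p f h ≠ ∞}

namespace NLp

variable {μ : Measure α} {h : α → N} {hh : SM h} {p : ℝ≥0∞}

def pem (μ : Measure α) (h : α → N) (hh : SM h) (p : ℝ≥0∞) (hp : 1 ≤ p) :
    PseudoEMetricSpace (NLp μ h hh p) where
  edist f g := Dp μ p f.1 g.1
  edist_self f := Dp_self μ p f.1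
  edist_comm f g := Dp_comm μ p f.1 g.1
  edist_triangle f g k := Dp_triangle hp (f.2.1.aesm μ) (g.2.1.aesm μ) (k.2.1.aesm μ)

theorem dp_ne_top (hp : 1 ≤ p) (f g : NLp μ h hh p) : Dp μ p f.1 g.1 ≠ ∞ := by
  have htri := Dp_triangle hp (f.2.1.aesm μ) (hh.aesm μ) (g.2.1.aesm μ)
  have h2 : Dp μ p h g.1 ≠ ∞ := by rw [Dp_comm]; exact g.2.2
  exact ne_top_of_le_ne_top (ENNReal.add_ne_top.2 ⟨f.2.2, h2⟩) htri

/-- The `D_p` pseudometric on the nonlinear Lebesgue space. -/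
instance [hp : Fact (1 ≤ p)] : PseudoMetricSpace (NLp μ h hh p) :=
  @PseudoEMetricSpace.toPseudoMetricSpace _ (pem μ h hh p hp.out)
    (fun f g => dp_ne_top hp.out f g)

instance [Fact (1 ≤ p)] : MeasurableSpace (NLp μ h hh p) := borel _
instance [Fact (1 ≤ p)] : BorelSpace (NLp μ h hh p) := ⟨rfl⟩

theorem edist_def [Fact (1 ≤ p)] (f g : NLp μ h hh p) :
    edist f g = Dp μ p f.1 g.1 := rfl

theorem dist_def [Fact (1 ≤ p)] (f g : NLp μ h hh p) :
    dist f g = (Dp μ p f.1 g.1).toReal := rfl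

end NLp

/-- Absolutely continuous curves: `c ∈ AC^p([a,b], X)`. -/
def MemACp {X : Type*} [PseudoMetricSpace X] (p : ℝ≥0∞) (a b : ℝ) (c : ℝ → X) : Prop :=
  ∃ m : ℝ → ℝ, MemLp m p (volume.restrict (Set.Icc a b)) ∧
    ∀ s t : ℝ, a ≤ s → s ≤ t → t ≤ b → dist (c s) (c t) ≤ ∫ r in s..t, m r

/-- The metric derivative of a curve at `t` (limit of difference quotients within `[a,b]`). -/
def mder {X : Type*} [PseudoMetricSpace X] (a b : ℝ) (c : ℝ → X) (t : ℝ) : ℝ :=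
  limUnder (𝓝[Set.Icc a b \ {t}] t) fun s => dist (c s) (c t) / |s - t|

instance : Fact ((1 : ℝ≥0∞) ≤ 2) := ⟨one_le_two⟩

section Geodesic

variable {X Y : Type*} [PseudoMetricSpace X] [PseudoMetricSpace Y]

def IsConstSpeedGeodesic (c : ℝ → X) : Prop :=
  ∀ s ∈ Icc (0:ℝ) 1, ∀ t ∈ Icc (0:ℝ) 1, dist (c s) (c t) = |s - t| * dist (c 0) (c 1)

variable (X) in
def IsGeodesicSpace : Prop :=
  ∀ x y : X, ∃ c : ℝ → X, c 0 = x ∧ c 1 = y ∧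
    ∀ s ∈ Icc (0:ℝ) 1, ∀ t ∈ Icc (0:ℝ) 1, dist (c s) (c t) = |s - t| * dist x y

variable (X) in
def SatisfiesNPC : Prop :=
  ∀ c : ℝ → X, IsConstSpeedGeodesic c → ∀ z : X, ∀ t ∈ Icc (0:ℝ) 1,
    dist z (c t) ^ 2 ≤ (1 - t) * dist z (c 0) ^ 2 + t * dist z (c 1) ^ 2
      - (1 - t) * t * dist (c 0) (c 1) ^ 2

theorem SatisfiesNPC.of_dist_eq_mul (hY : SatisfiesNPC Y) {ι : X → Y} {r : ℝ} (hr : 0 < r)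
    (hι : ∀ x y, dist (ι x) (ι y) = r * dist x y) : SatisfiesNPC X := by
  intro c hc z t ht
  have hιc : IsConstSpeedGeodesic (ι ∘ c) := fun s hs t ht => by
    simp only [Function.comp_apply, hι, hc s hs t ht]
    ring
  have hnpc := hY _ hιc (ι z) t ht
  simp only [Function.comp_apply, hι] at hnpc
  refine le_of_mul_le_mul_left ?_ (pow_pos hr 2)
  linarith

end Geodesic

theorem exists_geodesic_of_rat {X : Type*} [MetricSpace X] [CompleteSpace X] (g : ℚ → X) (L : ℝ)
    (hg : ∀ q q' : ℚ, (q:ℝ) ∈ Icc (0:ℝ) 1 → (q':ℝ) ∈ Icc (0:ℝ) 1 →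
      dist (g q) (g q') = |(q:ℝ) - q'| * L) :
    ∃ γ : ℝ → X, γ 0 = g 0 ∧ γ 1 = g 1 ∧
      ∀ s ∈ Icc (0:ℝ) 1, ∀ t ∈ Icc (0:ℝ) 1, dist (γ s) (γ t) = |s - t| * L := by
  set clamp : ℝ → ℝ := fun u => max (min u 1) 0
  have hclamp_mem : ∀ u, clamp u ∈ Icc (0:ℝ) 1 := fun u =>
    ⟨le_max_right _ _, max_le (min_le_right _ _) zero_le_one⟩
  have hclamp_eq : ∀ u ∈ Icc (0:ℝ) 1, clamp u = u := fun u hu => by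
    simp only [clamp, min_eq_left hu.2, max_eq_left hu.1]
  have hclamp_lip : ∀ u v, |clamp u - clamp v| ≤ |u - v| := fun u v =>
    (abs_max_sub_max_le_abs _ _ _).trans <| by simpa using abs_min_sub_min_le_max u 1 v 1
  set g' : ℚ → X := fun q => g (max (min q 1) 0)
  have hg' : ∀ q q' : ℚ, dist (g' q) (g' q') = |clamp q - clamp q'| * L := fun q q' => by
    have hcast : ∀ q : ℚ, ((max (min q 1) 0 : ℚ) : ℝ) = clamp q := fun q => by
      simp only [clamp]; push_cast; rfl
    simp only [g', hg _ _ (by rw [hcast]; exact hclamp_mem q) (by rw [hcast]; exact hclamp_mem q'),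
      hcast]
  have hL : 0 ≤ L := by
    have h10 := hg 1 0 (by norm_num) (by norm_num)
    norm_num at h10
    exact h10 ▸ dist_nonneg
  have hlip : LipschitzWith L.toNNReal g' := LipschitzWith.of_dist_le_mul fun q q' => by
    rw [hg', Rat.dist_eq, Real.coe_toNNReal _ hL, mul_comm L]
    exact mul_le_mul_of_nonneg_right (hclamp_lip _ _) hL
  have hemb := Rat.isUniformEmbedding_coe_real.isUniformInducing
  set γ := (hemb.isDenseInducing Rat.denseRange_cast).extend g'
  have hγ : ∀ q : ℚ, γ q = g' q :=
    uniformly_extend_of_ind hemb Rat.denseRange_cast hlip.uniformContinuous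
  have hγc : Continuous γ :=
    (uniformContinuous_uniformly_extend hemb Rat.denseRange_cast hlip.uniformContinuous).continuous
  have hdist : ∀ s t : ℝ, dist (γ s) (γ t) = |clamp s - clamp t| * L :=
    Rat.denseRange_cast.induction_on₂ (isClosed_eq (by fun_prop) (by fun_prop))
      fun q q' => by rw [hγ, hγ, hg']
  refine ⟨γ, by simpa [g'] using hγ 0, by simpa [g'] using hγ 1, fun s hs t ht => ?_⟩
  rw [hdist, hclamp_eq s hs, hclamp_eq t ht]

section SquareIntegrable

variable {μ : Measure α}

theorem mul_mul_sq_le_of_le_add {a b u v z : ℝ} (ha : 0 ≤ a) (hb : 0 ≤ b) (hz : 0 ≤ z)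
    (hzuv : z ≤ u + v) : a * b * z ^ 2 ≤ (a + b) * (b * u ^ 2 + a * v ^ 2) := by
  nlinarith [sq_nonneg (b * u - a * v), mul_nonneg ha hb, mul_le_mul hzuv hzuv hz (hz.trans hzuv)]

theorem mul_eq_mul_of_add_mul_sq_le {a b u v z : ℝ} (ha : 0 ≤ a) (hb : 0 ≤ b)
    (hzuv : z ≤ u + v) (huzv : u ≤ z + v) (hvuz : v ≤ u + z)
    (h : (a + b) * (b * u ^ 2 + a * v ^ 2) ≤ a * b * z ^ 2) :
    (a + b) * u = a * z ∧ (a + b) * v = b * z := by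
  have hz : 0 ≤ z := by linarith
  have hab : a * b * z ^ 2 ≤ a * b * (u + v) ^ 2 :=
    mul_le_mul_of_nonneg_left (pow_le_pow_left₀ hz hzuv 2) (mul_nonneg ha hb)
  -- `(a + b) * (b * u ^ 2 + a * v ^ 2) - a * b * (u + v) ^ 2 = (b * u - a * v) ^ 2`
  have hbu : b * u = a * v := by nlinarith [sq_nonneg (b * u - a * v)]
  rcases ha.eq_or_lt with rfl | ha
  · rcases hb.eq_or_lt with rfl | hb
    · simp
    · have hu : u = 0 := by simpa [hb.ne'] using hbu
      subst hu
      constructor <;> nlinarith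
  rcases hb.eq_or_lt with rfl | hb
  · have hv : v = 0 := by simpa [ha.ne'] using hbu.symm
    subst hv
    constructor <;> nlinarith
  have huv : u + v = z := by
    have : (u + v) ^ 2 ≤ z ^ 2 := le_of_mul_le_mul_left (by nlinarith) (mul_pos ha hb)
    exact le_antisymm ((pow_le_pow_iff_left₀ (by linarith) hz two_ne_zero).1 this) hzuv
  constructor <;> nlinarith

theorem ae_mul_eq_mul_of_integral_sq_eq {U V Z : α → ℝ}
    (hU : MemLp U 2 μ) (hV : MemLp V 2 μ) (hZ : MemLp Z 2 μ)
    (hZUV : ∀ x, Z x ≤ U x + V x) (hUZV : ∀ x, U x ≤ Z x + V x) (hVUZ : ∀ x, V x ≤ U x + Z x)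
    {a b : ℝ} (ha : 0 ≤ a) (hb : 0 ≤ b) (hUa : ∫ x, U x ^ 2 ∂μ = a ^ 2)
    (hVb : ∫ x, V x ^ 2 ∂μ = b ^ 2) (hZab : ∫ x, Z x ^ 2 ∂μ = (a + b) ^ 2) :
    ∀ᵐ x ∂μ, (a + b) * U x = a * Z x ∧ (a + b) * V x = b * Z x := by
  set f : α → ℝ := fun x => (a + b) * (b * U x ^ 2 + a * V x ^ 2) - a * b * Z x ^ 2
  have hf_nonneg : 0 ≤ f := fun x =>
    sub_nonneg.2 (mul_mul_sq_le_of_le_add ha hb (by linarith [hUZV x, hVUZ x]) (hZUV x))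
  have hUV : Integrable (fun x => b * U x ^ 2 + a * V x ^ 2) μ :=
    (hU.integrable_sq.const_mul b).add (hV.integrable_sq.const_mul a)
  have hf_int : Integrable f μ := (hUV.const_mul _).sub (hZ.integrable_sq.const_mul _)
  have hf_zero : ∫ x, f x ∂μ = 0 := by
    rw [integral_sub (hUV.const_mul _) (hZ.integrable_sq.const_mul _), integral_const_mul,
      integral_const_mul, integral_add (hU.integrable_sq.const_mul b)
        (hV.integrable_sq.const_mul a), integral_const_mul, integral_const_mul, hUa, hVb, hZab]
    ring
  filter_upwards [(integral_eq_zero_iff_of_nonneg hf_nonneg hf_int).1 hf_zero] with x hx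
  exact mul_eq_mul_of_add_mul_sq_le ha hb (hZUV x) (hUZV x) (hVUZ x) (sub_eq_zero.1 hx).le

end SquareIntegrable

namespace NLp

variable {μ : Measure α} {h : α → N} {hh : SM h} {p : ℝ≥0∞}

theorem memLp_dist [Fact (1 ≤ p)] (f g : NLp μ h hh p) :
    MemLp (fun x => dist (f.1 x) (g.1 x)) p μ :=
  ⟨(f.2.1.aesm μ).dist (g.2.1.aesm μ), lt_top_iff_ne_top.2 (dp_ne_top Fact.out f g)⟩

theorem integral_dist_sq (f g : NLp μ h hh 2) :
    ∫ x, dist (f.1 x) (g.1 x) ^ 2 ∂μ = dist f g ^ 2 := by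
  have hI : 0 ≤ ∫ x, dist (f.1 x) (g.1 x) ^ 2 ∂μ := integral_nonneg fun x => sq_nonneg _
  rw [dist_def, Dp, (memLp_dist f g).eLpNorm_eq_integral_rpow_norm two_ne_zero ofNat_ne_top]
  simp only [Real.norm_eq_abs, abs_dist, toReal_ofNat, Real.rpow_two, ← one_div,
    ← Real.sqrt_eq_rpow]
  rw [ENNReal.toReal_ofReal (Real.sqrt_nonneg _), Real.sq_sqrt hI]

theorem ae_mul_dist_eq_of_dist_eq_add (P Q R : NLp μ h hh 2) {a b : ℝ} (ha : 0 ≤ a) (hb : 0 ≤ b)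
    (hPQ : dist P Q = a) (hQR : dist Q R = b) (hPR : dist P R = a + b) :
    ∀ᵐ x ∂μ, (a + b) * dist (P.1 x) (Q.1 x) = a * dist (P.1 x) (R.1 x) ∧
      (a + b) * dist (Q.1 x) (R.1 x) = b * dist (P.1 x) (R.1 x) :=
  ae_mul_eq_mul_of_integral_sq_eq (memLp_dist P Q) (memLp_dist Q R) (memLp_dist P R)
    (fun x => dist_triangle _ _ _) (fun x => dist_triangle_right _ _ _)
    (fun x => dist_triangle_left _ _ _) ha hb
    (by rw [integral_dist_sq, hPQ]) (by rw [integral_dist_sq, hQR]) (by rw [integral_dist_sq, hPR])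

theorem exists_seq_tendsto_ae [Fact (1 ≤ p)] {f : ℕ → NLp μ h hh p} {F : NLp μ h hh p}
    (hf : Tendsto f atTop (𝓝 F)) :
    ∃ ns : ℕ → ℕ, StrictMono ns ∧ ∀ᵐ x ∂μ, Tendsto (fun k => (f (ns k)).1 x) atTop (𝓝 (F.1 x)) := by
  have hmeas : TendstoInMeasure μ (fun n x => dist ((f n).1 x) (F.1 x)) atTop 0 := by
    refine tendstoInMeasure_of_tendsto_eLpNorm (zero_lt_one.trans_le (Fact.out : 1 ≤ p)).ne'
      (fun n => ((f n).2.1.aesm μ).dist (F.2.1.aesm μ)) aestronglyMeasurable_const ?_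
    simpa [edist_def, Dp] using tendsto_iff_edist_tendsto_0.1 hf
  obtain ⟨ns, hns, hae⟩ := hmeas.exists_seq_tendsto_ae
  exact ⟨ns, hns, hae.mono fun x hx => tendsto_iff_dist_tendsto_zero.2 hx⟩

end NLp

theorem IsConstSpeedGeodesic.ae_dist_eq {μ : Measure α} {h : α → N} {hh : SM h}
    {c : ℝ → NLp μ h hh 2}
    (hc : IsConstSpeedGeodesic c) (hc01 : 0 < dist (c 0) (c 1)) {s t : ℝ}
    (hs : s ∈ Icc (0:ℝ) 1) (ht : t ∈ Icc (0:ℝ) 1) :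
    ∀ᵐ x ∂μ, dist ((c s).1 x) ((c t).1 x) = |s - t| * dist ((c 0).1 x) ((c 1).1 x) := by
  have h0 : (0:ℝ) ∈ Icc (0:ℝ) 1 := left_mem_Icc.2 zero_le_one
  have h1 : (1:ℝ) ∈ Icc (0:ℝ) 1 := right_mem_Icc.2 zero_le_one
  suffices key : ∀ s t, s ∈ Icc (0:ℝ) 1 → t ∈ Icc (0:ℝ) 1 → s ≤ t →
      ∀ᵐ x ∂μ, dist ((c s).1 x) ((c t).1 x) = (t - s) * dist ((c 0).1 x) ((c 1).1 x) by
    rcases le_total s t with hst | hts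
    · simpa [abs_of_nonpos (sub_nonpos.2 hst)] using key s t hs ht hst
    · simpa [dist_comm, abs_of_nonneg (sub_nonneg.2 hts)] using key t s ht hs hts
  intro s t hs ht hst
  rcases ht.1.eq_or_lt with rfl | htpos
  · obtain rfl : s = 0 := le_antisymm hst hs.1
    simp
  set K := dist (c 0) (c 1)
  have hd : ∀ u ∈ Icc (0:ℝ) 1, ∀ v ∈ Icc (0:ℝ) 1, u ≤ v → dist (c u) (c v) = (v - u) * K :=
    fun u hu v hv huv => by rw [hc u hu v hv, abs_of_nonpos (sub_nonpos.2 huv), neg_sub]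
  -- equality in the triangle inequality for `c 0, c s, c t` and for `c 0, c t, c 1`
  have h0st := NLp.ae_mul_dist_eq_of_dist_eq_add (c 0) (c s) (c t)
    (mul_nonneg hs.1 hc01.le) (mul_nonneg (sub_nonneg.2 hst) hc01.le)
    (by rw [hd 0 h0 s hs hs.1, sub_zero]) (hd s hs t ht hst)
    (by rw [hd 0 h0 t ht ht.1]; ring)
  have h0t1 := NLp.ae_mul_dist_eq_of_dist_eq_add (c 0) (c t) (c 1)
    (mul_nonneg ht.1 hc01.le) (mul_nonneg (sub_nonneg.2 ht.2) hc01.le)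
    (by rw [hd 0 h0 t ht ht.1, sub_zero]) (hd t ht 1 h1 ht.2)
    (by rw [hd 0 h0 1 h1 zero_le_one]; ring)
  filter_upwards [h0st, h0t1] with x hx1 hx2
  refine mul_left_cancel₀ (mul_pos htpos hc01).ne' ?_
  linear_combination hx1.2 + (t - s) * hx2.1

theorem SM.exists_measurableSet_dist_le_one {h : α → N} (hh : SM h) {μ : Measure α} {A₀ : Set α}
    (hA₀ : MeasurableSet A₀) (h0 : μ A₀ ≠ 0) (htop : μ A₀ ≠ ∞) :
    ∃ (A : Set α) (z : N), MeasurableSet A ∧ μ A ≠ 0 ∧ μ A ≠ ∞ ∧ ∀ x ∈ A, dist (h x) z ≤ 1 := by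
  obtain ⟨T, hTc, hTsub⟩ := hh.2
  have hcov : A₀ ⊆ ⋃ z ∈ T, A₀ ∩ h ⁻¹' Metric.ball z 1 := fun x hx => by
    obtain ⟨z, hzT, hz⟩ := Metric.mem_closure_iff.1 (hTsub (mem_range_self x)) 1 one_pos
    exact mem_biUnion hzT ⟨hx, by rwa [mem_preimage, Metric.mem_ball]⟩
  obtain ⟨z, -, hz⟩ : ∃ z ∈ T, μ (A₀ ∩ h ⁻¹' Metric.ball z 1) ≠ 0 := by
    by_contra! H
    exact h0 (measure_mono_null hcov ((measure_biUnion_null_iff hTc).2 H))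
  exact ⟨_, z, hA₀.inter (hh.1 Metric.isOpen_ball.measurableSet), hz,
    ne_top_of_le_ne_top htop (measure_mono inter_subset_left),
    fun x hx => (Metric.mem_ball.1 hx.2).le⟩

section Embedding

open scoped Classical

variable {μ : Measure α} {h : α → N} {A : Set α} {z : N}

theorem SM.piecewise_const (hh : SM h) (hA : MeasurableSet A) (y : N) :
    SM (A.piecewise (fun _ => y) h) := by
  refine ⟨measurable_const.piecewise hA hh.1,
    ((countable_singleton y).isSeparable.union hh.2).mono ?_⟩
  rintro _ ⟨x, rfl⟩
  by_cases hx : x ∈ A <;> simp [hx]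

theorem Dp_piecewise_const_ne_top {p : ℝ≥0∞} (hAfin : μ A ≠ ∞)
    (hz : ∀ x ∈ A, dist (h x) z ≤ 1) (y : N) : Dp μ p (A.piecewise (fun _ => y) h) h ≠ ∞ := by
  have hle : ∀ x, ‖dist (A.piecewise (fun _ => y) h x) (h x)‖ ≤
      A.indicator (fun _ => dist y z + 1) x := fun x => by
    by_cases hx : x ∈ A
    · simp only [piecewise_eq_of_mem _ _ _ hx, indicator_of_mem hx, Real.norm_eq_abs, abs_dist]
      linarith [dist_triangle y z (h x), dist_comm z (h x) ▸ hz x hx]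
    · simp [hx]
  refine ne_top_of_le_ne_top ?_ ((eLpNorm_mono_real hle).trans (eLpNorm_indicator_const_le _ p))
  exact mul_ne_top enorm_ne_top (rpow_ne_top_of_nonneg (by positivity) hAfin)

namespace NLp

variable {p : ℝ≥0∞}

def embed (hh : SM h) (hA : MeasurableSet A) (hAfin : μ A ≠ ∞) (hz : ∀ x ∈ A, dist (h x) z ≤ 1)
    (y : N) : NLp μ h hh p :=
  ⟨A.piecewise (fun _ => y) h, hh.piecewise_const hA y, Dp_piecewise_const_ne_top hAfin hz y⟩

variable {hh : SM h} {hA : MeasurableSet A} {hAfin : μ A ≠ ∞} {hz : ∀ x ∈ A, dist (h x) z ≤ 1}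

theorem embed_apply_of_mem (y : N) {x : α} (hx : x ∈ A) :
    (embed (p := p) hh hA hAfin hz y).1 x = y :=
  piecewise_eq_of_mem A (fun _ => y) h hx

theorem dist_embed [Fact (1 ≤ p)] (hp : p ≠ ∞) (y y' : N) :
    dist (embed (p := p) hh hA hAfin hz y) (embed hh hA hAfin hz y') =
      (μ A).toReal ^ (1 / p.toReal) * dist y y' := by
  have hind : (fun x => dist ((embed (p := p) hh hA hAfin hz y).1 x)
      ((embed (p := p) hh hA hAfin hz y').1 x)) = A.indicator (fun _ => dist y y') := by
    ext x
    by_cases hx : x ∈ A <;> simp [embed, hx]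
  rw [dist_def, Dp, hind, eLpNorm_indicator_const hA (zero_lt_one.trans_le Fact.out).ne' hp,
    toReal_mul, ← toReal_rpow, mul_comm, Real.enorm_of_nonneg dist_nonneg,
    toReal_ofReal dist_nonneg]

end NLp

end Embedding

section Transfer

variable {μ : Measure α} {h : α → N} {hh : SM h} {A : Set α} {z : N}

theorem completeSpace_of_completeSpace_nlp {p : ℝ≥0∞} [Fact (1 ≤ p)] (hp : p ≠ ∞)
    [CompleteSpace (NLp μ h hh p)] (hA : MeasurableSet A) (hA0 : μ A ≠ 0) (hAfin : μ A ≠ ∞)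
    (hz : ∀ x ∈ A, dist (h x) z ≤ 1) : CompleteSpace N := by
  refine Metric.complete_of_cauchySeq_tendsto fun u hu => ?_
  set r := (μ A).toReal ^ (1 / p.toReal)
  have hlip : LipschitzWith r.toNNReal (NLp.embed (p := p) hh hA hAfin hz) :=
    LipschitzWith.of_dist_le_mul fun y y' => by
      rw [Real.coe_toNNReal _ (by positivity), NLp.dist_embed hp]
  obtain ⟨F, hF⟩ := cauchySeq_tendsto_of_complete (hlip.uniformContinuous.comp_cauchySeq hu)
  obtain ⟨ns, hns, hae⟩ := NLp.exists_seq_tendsto_ae hF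
  obtain ⟨x, hxA, hx⟩ := Measure.exists_mem_of_measure_ne_zero_of_ae hA0 (ae_restrict_of_ae hae)
  refine ⟨F.1 x, tendsto_nhds_of_cauchySeq_of_subseq hu hns.tendsto_atTop ?_⟩
  simpa [Function.comp_def, NLp.embed_apply_of_mem _ hxA] using hx

theorem isGeodesicSpace_of_isGeodesicSpace_nlp [CompleteSpace N]
    (hgeo : IsGeodesicSpace (NLp μ h hh 2)) (hA : MeasurableSet A) (hA0 : μ A ≠ 0)
    (hAfin : μ A ≠ ∞) (hz : ∀ x ∈ A, dist (h x) z ≤ 1) : IsGeodesicSpace N := by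
  intro y y'
  rcases eq_or_ne y y' with rfl | hyy'
  · exact ⟨fun _ => y, rfl, rfl, fun s _ t _ => by simp⟩
  set ι := NLp.embed (μ := μ) (p := 2) hh hA hAfin hz
  obtain ⟨c, hc0, hc1, hc⟩ := hgeo (ι y) (ι y')
  have hcgeo : IsConstSpeedGeodesic c := fun s hs t ht => by rw [hc s hs t ht, hc0, hc1]
  have hpos : 0 < dist (c 0) (c 1) := by
    rw [hc0, hc1, NLp.dist_embed (p := 2) ofNat_ne_top]
    exact mul_pos (Real.rpow_pos_of_pos (toReal_pos hA0 hAfin) _) (dist_pos.2 hyy')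
  have hae : ∀ᵐ x ∂μ, ∀ q q' : ℚ, (q:ℝ) ∈ Icc (0:ℝ) 1 → (q':ℝ) ∈ Icc (0:ℝ) 1 →
      dist ((c q).1 x) ((c q').1 x) = |(q:ℝ) - q'| * dist ((c 0).1 x) ((c 1).1 x) := by
    refine ae_all_iff.2 fun q => ae_all_iff.2 fun q' => ?_
    by_cases hq : (q:ℝ) ∈ Icc (0:ℝ) 1 ∧ (q':ℝ) ∈ Icc (0:ℝ) 1
    · filter_upwards [hcgeo.ae_dist_eq hpos hq.1 hq.2] with x hx using fun _ _ => hx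
    · exact Eventually.of_forall fun x h1 h2 => absurd ⟨h1, h2⟩ hq
  obtain ⟨x, hxA, hx⟩ := Measure.exists_mem_of_measure_ne_zero_of_ae hA0 (ae_restrict_of_ae hae)
  have hend : ∀ u ∈ A, (c 0).1 u = y ∧ (c 1).1 u = y' := fun u hu => by
    rw [hc0, hc1]
    exact ⟨NLp.embed_apply_of_mem y hu, NLp.embed_apply_of_mem y' hu⟩
  obtain ⟨γ, hγ0, hγ1, hγ⟩ := exists_geodesic_of_rat (fun q => (c q).1 x) (dist y y')
    fun q q' hq hq' => by rw [hx q q' hq hq', (hend x hxA).1, (hend x hxA).2]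
  refine ⟨γ, ?_, ?_, hγ⟩
  · simpa [(hend x hxA).1] using hγ0
  · simpa [(hend x hxA).2] using hγ1

end Transfer

/-- If the measure `μ` is not purely infinite (some measurable set has finite positive
measure) and `(L²_h(M,N), D₂)` is a complete geodesic space satisfying the global NPC
comparison inequality, then `N` is also a complete geodesic space satisfying the global
NPC comparison inequality. -/
theorem stmt18 {α : Type*} [MeasurableSpace α] {N : Type*} [MetricSpace N]
    [MeasurableSpace N] [BorelSpace N]
    (μ : Measure α) (hμ : ∃ A : Set α, MeasurableSet A ∧ 0 < μ A ∧ μ A < ∞)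
    (h : α → N) (hh : SM h)
    (hcomplete : CompleteSpace (NLp μ h hh 2))
    (hgeo : ∀ F F' : NLp μ h hh 2, ∃ c : ℝ → NLp μ h hh 2, c 0 = F ∧ c 1 = F' ∧
      ∀ s ∈ Set.Icc (0:ℝ) 1, ∀ t ∈ Set.Icc (0:ℝ) 1,
        dist (c s) (c t) = |s - t| * dist F F')
    (hnpc : ∀ c : ℝ → NLp μ h hh 2,
      (∀ s ∈ Set.Icc (0:ℝ) 1, ∀ t ∈ Set.Icc (0:ℝ) 1,
        dist (c s) (c t) = |s - t| * dist (c 0) (c 1)) →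
      ∀ F : NLp μ h hh 2, ∀ t ∈ Set.Icc (0:ℝ) 1,
        dist F (c t) ^ 2 ≤ (1 - t) * dist F (c 0) ^ 2 + t * dist F (c 1) ^ 2
          - (1 - t) * t * dist (c 0) (c 1) ^ 2) :
    CompleteSpace N ∧
    (∀ y y' : N, ∃ γ : ℝ → N, γ 0 = y ∧ γ 1 = y' ∧
      ∀ s ∈ Set.Icc (0:ℝ) 1, ∀ t ∈ Set.Icc (0:ℝ) 1,
        dist (γ s) (γ t) = |s - t| * dist y y') ∧
    (∀ γ : ℝ → N,
      (∀ s ∈ Set.Icc (0:ℝ) 1, ∀ t ∈ Set.Icc (0:ℝ) 1,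
        dist (γ s) (γ t) = |s - t| * dist (γ 0) (γ 1)) →
      ∀ z : N, ∀ t ∈ Set.Icc (0:ℝ) 1,
        dist z (γ t) ^ 2 ≤ (1 - t) * dist z (γ 0) ^ 2 + t * dist z (γ 1) ^ 2
          - (1 - t) * t * dist (γ 0) (γ 1) ^ 2) := by
  obtain ⟨A₀, hA₀, hA₀pos, hA₀fin⟩ := hμ
  obtain ⟨A, z, hA, hA0, hAfin, hz⟩ :=
    hh.exists_measurableSet_dist_le_one hA₀ hA₀pos.ne' hA₀fin.ne
  have hN : CompleteSpace N :=
    completeSpace_of_completeSpace_nlp (p := 2) ofNat_ne_top hA hA0 hAfin hz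
  refine ⟨hN, isGeodesicSpace_of_isGeodesicSpace_nlp hgeo hA hA0 hAfin hz, ?_⟩
  exact SatisfiesNPC.of_dist_eq_mul (Y := NLp μ h hh 2) hnpc
    (Real.rpow_pos_of_pos (toReal_pos hA0 hAfin) _)
    (NLp.dist_embed (p := 2) (hA := hA) (hAfin := hAfin) (hz := hz) ofNat_ne_top)

end NLS
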